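/- arXiv:1509.05321 — 2 statements merged into one kernel-verified Lean document; each statement's English description precedes it below -/
import Mathlib

section
/- Let d ∈ {2,3}, D ⊂ R^d bounded, G : D×D → R with |G(x,y)| ≤ C|x−y|^{2−d} (d=3) or C(|log|x−y||+1) (d=2), u ∈ L^∞(D), and R ∈ L¹(R^d) ∩ L^∞(R^d). Define χ^ε(x) = −∫_D G(x,y) ν_ε(y) u(y) dy where ν_ε is a mean-zero stationary field with E[ν_ε(y)ν_ε(z)] = R((y−z)/ε). Then E ‖χ^ε‖²_{L²(D)} ≤ C' ε^d for a constant C' independent of ε. -/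
open MeasureTheory Bornology
open Metric


lemma aux_integrableOn_norm_rpow_ball {d : ℕ} (hd : 0 < d) {s : ℝ} (hs0 : 0 ≤ s)
    (hsd : s < d) (r : ℝ) :
    IntegrableOn (fun x : EuclideanSpace ℝ (Fin d) => ‖x‖ ^ (-s)) (ball 0 r) := by
  have hne : Nontrivial (EuclideanSpace ℝ (Fin d)) := by
    have : 0 < Module.finrank ℝ (EuclideanSpace ℝ (Fin d)) := by
      rw [finrank_euclideanSpace_fin]; exact hd
    exact Module.nontrivial_of_finrank_pos this
  rcases le_or_gt r 0 with hr | hr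
  · rw [ball_eq_empty.2 hr]; simp [integrableOn_empty]
  set q : ℝ := 2⁻¹ with hq
  have hq0 : (0:ℝ) < q := by norm_num [hq]
  have hq1 : q < 1 := by norm_num [hq]
  set S : ℕ → Set (EuclideanSpace ℝ (Fin d)) :=
    fun n => ball 0 (r * q ^ n) \ ball 0 (r * q ^ (n + 1)) with hS
  have hcover : ball (0 : EuclideanSpace ℝ (Fin d)) r ⊆ {0} ∪ ⋃ n, S n := by
    intro x hx
    rcases eq_or_ne x 0 with rfl | hx0
    · exact Or.inl rfl
    right
    have hxpos : 0 < ‖x‖ := norm_pos_iff.2 hx0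
    have hex : ∃ n, r * q ^ (n + 1) ≤ ‖x‖ := by
      obtain ⟨n, hn⟩ := exists_pow_lt_of_lt_one (div_pos hxpos hr) hq1
      refine ⟨n, ?_⟩
      have : q ^ (n + 1) ≤ q ^ n := pow_le_pow_of_le_one hq0.le hq1.le (Nat.le_succ n)
      calc r * q ^ (n + 1) ≤ r * q ^ n := by nlinarith
        _ ≤ ‖x‖ := by
          have := (lt_div_iff₀ hr).1 hn; nlinarith
    classical
    refine Set.mem_iUnion.2 ⟨Nat.find hex, ?_, ?_⟩
    · simp only [mem_ball, dist_zero_right]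
      rcases Nat.eq_zero_or_pos (Nat.find hex) with h0 | hpos
      · rw [h0, pow_zero, mul_one]
        simpa using hx
      · have := Nat.find_min hex (Nat.sub_lt hpos one_pos)
        push_neg at this
        have h1 : Nat.find hex - 1 + 1 = Nat.find hex := Nat.succ_pred_eq_of_pos hpos
        rwa [h1] at this
    · simp only [mem_ball, dist_zero_right, not_lt]
      exact Nat.find_spec hex
  refine ⟨(measurable_norm.pow_const _).aestronglyMeasurable, ?_⟩
  have hnonneg : ∀ x : EuclideanSpace ℝ (Fin d), 0 ≤ ‖x‖ ^ (-s) :=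
    fun x => Real.rpow_nonneg (norm_nonneg x) _
  rw [hasFiniteIntegral_iff_ofReal (Filter.Eventually.of_forall hnonneg)]
  have key : ∀ n, (∫⁻ x in S n, ENNReal.ofReal (‖x‖ ^ (-s))) ≤
      (ENNReal.ofReal ((r ^ (-s) * q ^ (-s) * r ^ d) ) * volume (ball (0:EuclideanSpace ℝ (Fin d)) 1)) * (ENNReal.ofReal (q ^ ((d:ℝ) - s))) ^ n := by
    intro n
    have hb0 : 0 < r * q ^ (n+1) := by positivity
    have step1 : (∫⁻ x in S n, ENNReal.ofReal (‖x‖ ^ (-s))) ≤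
        ENNReal.ofReal ((r * q ^ (n+1)) ^ (-s)) * volume (S n) := by
      rw [← setLIntegral_const]
      refine setLIntegral_mono measurable_const fun x hx => ?_
      refine ENNReal.ofReal_le_ofReal ?_
      refine Real.rpow_le_rpow_of_nonpos hb0 ?_ (neg_nonpos.2 hs0)
      have := hx.2
      simpa [mem_ball, dist_zero_right, not_lt] using this
    have step2 : volume (S n) ≤ ENNReal.ofReal ((r * q ^ n) ^ d) *
        volume (ball (0:EuclideanSpace ℝ (Fin d)) 1) := by
      refine le_trans (measure_mono Set.diff_subset) ?_
      rw [Measure.addHaar_ball (μ := (volume : Measure (EuclideanSpace ℝ (Fin d)))) 0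
        (by positivity : (0:ℝ) ≤ r * q ^ n), finrank_euclideanSpace_fin]
    calc (∫⁻ x in S n, ENNReal.ofReal (‖x‖ ^ (-s)))
        ≤ ENNReal.ofReal ((r * q ^ (n+1)) ^ (-s)) *
          (ENNReal.ofReal ((r * q ^ n) ^ d) * volume (ball (0:EuclideanSpace ℝ (Fin d)) 1)) :=
          le_trans step1 (mul_le_mul_right step2 _)
      _ = _ := by
          have e : (r * q ^ (n+1)) ^ (-s) * (r * q ^ n) ^ d
              = (r ^ (-s) * q ^ (-s) * r ^ d) * (q ^ ((d:ℝ) - s)) ^ n := by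
            have e1 : (r * q ^ (n+1)) ^ (-s) = r ^ (-s) * (q ^ (-s)) ^ (n+1) := by
              rw [Real.mul_rpow hr.le (by positivity)]
              congr 1
              rw [← Real.rpow_natCast q (n+1), ← Real.rpow_mul hq0.le, mul_comm,
                Real.rpow_mul hq0.le (-s), Real.rpow_natCast]
            have e2 : (r * q ^ n) ^ d = r ^ d * (q ^ d) ^ n := by
              rw [mul_pow, ← pow_mul, ← pow_mul, Nat.mul_comm]
            have e3 : q ^ ((d:ℝ) - s) = q ^ (d:ℕ) * q ^ (-s) := by
              rw [← Real.rpow_natCast q d, ← Real.rpow_add hq0]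
              ring_nf
            rw [e1, e2, e3, mul_pow, pow_succ]
            ring
          calc ENNReal.ofReal ((r * q ^ (n+1)) ^ (-s)) *
              (ENNReal.ofReal ((r * q ^ n) ^ d) * volume (ball (0:EuclideanSpace ℝ (Fin d)) 1))
              = ENNReal.ofReal ((r * q ^ (n+1)) ^ (-s) * (r * q ^ n) ^ d) *
                volume (ball (0:EuclideanSpace ℝ (Fin d)) 1) := by
                rw [ENNReal.ofReal_mul (by positivity)]; ring
            _ = ENNReal.ofReal ((r ^ (-s) * q ^ (-s) * r ^ d) * (q ^ ((d:ℝ) - s)) ^ n) *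
                volume (ball (0:EuclideanSpace ℝ (Fin d)) 1) := by rw [e]
            _ = _ := by
                rw [ENNReal.ofReal_mul (by positivity), ENNReal.ofReal_pow (by positivity)]
                ring
  have hsum : (∫⁻ x in ball (0:EuclideanSpace ℝ (Fin d)) r, ENNReal.ofReal (‖x‖ ^ (-s))) ≤
      (ENNReal.ofReal ((r ^ (-s) * q ^ (-s) * r ^ d)) * volume (ball (0:EuclideanSpace ℝ (Fin d)) 1)) *
        (1 - ENNReal.ofReal (q ^ ((d:ℝ) - s)))⁻¹ := by
    calc (∫⁻ x in ball (0:EuclideanSpace ℝ (Fin d)) r, ENNReal.ofReal (‖x‖ ^ (-s)))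
        ≤ ∫⁻ x in {0} ∪ ⋃ n, S n, ENNReal.ofReal (‖x‖ ^ (-s)) := lintegral_mono_set hcover
      _ ≤ (∫⁻ x in ({0} : Set (EuclideanSpace ℝ (Fin d))), ENNReal.ofReal (‖x‖ ^ (-s))) +
          ∫⁻ x in ⋃ n, S n, ENNReal.ofReal (‖x‖ ^ (-s)) := lintegral_union_le _ _ _
      _ ≤ 0 + ∑' n, ∫⁻ x in S n, ENNReal.ofReal (‖x‖ ^ (-s)) := by
          gcongr
          · rw [setLIntegral_measure_zero _ _ (measure_singleton 0)]
          · exact lintegral_iUnion_le _ _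
      _ ≤ ∑' n, (ENNReal.ofReal ((r ^ (-s) * q ^ (-s) * r ^ d)) * volume (ball (0:EuclideanSpace ℝ (Fin d)) 1)) * (ENNReal.ofReal (q ^ ((d:ℝ) - s))) ^ n := by
          rw [zero_add]; exact ENNReal.tsum_le_tsum key
      _ = _ := by rw [ENNReal.tsum_mul_left, ENNReal.tsum_geometric]
  refine lt_of_le_of_lt hsum ?_
  have hρ : ENNReal.ofReal (q ^ ((d:ℝ) - s)) < 1 := by
    rw [ENNReal.ofReal_lt_one]
    exact Real.rpow_lt_one hq0.le hq1 (by linarith)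
  refine ENNReal.mul_lt_top (ENNReal.mul_lt_top ENNReal.ofReal_lt_top measure_ball_lt_top) ?_
  rw [ENNReal.inv_lt_top]
  exact tsub_pos_iff_lt.2 hρ

lemma aux_restrict_ball_map {d : ℕ} (x : EuclideanSpace ℝ (Fin d)) (t : ℝ) :
    (volume : Measure (EuclideanSpace ℝ (Fin d))).restrict (ball x t) =
      Measure.map (· + x) (volume.restrict (ball 0 t)) := by
  have hmeas : Measurable (fun w : EuclideanSpace ℝ (Fin d) => w + x) := measurable_add_const x
  have hpre : (fun w : EuclideanSpace ℝ (Fin d) => w + x) ⁻¹' (ball x t) = ball 0 t := by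
    ext w
    simp [mem_ball, dist_eq_norm, add_sub_cancel_right]
  conv_lhs => rw [← (measurePreserving_add_right
    (volume : Measure (EuclideanSpace ℝ (Fin d))) x).map_eq]
  rw [Measure.restrict_map hmeas measurableSet_ball, hpre]

lemma aux_shift {d : ℕ} (hd : 0 < d) {s : ℝ} (hs0 : 0 ≤ s) (hsd : s < d)
    (x : EuclideanSpace ℝ (Fin d)) (t : ℝ) :
    IntegrableOn (fun y => ‖y - x‖ ^ (-s)) (ball x t) ∧
      ∫ y in ball x t, ‖y - x‖ ^ (-s) =
        ∫ w in ball (0 : EuclideanSpace ℝ (Fin d)) t, ‖w‖ ^ (-s) := by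
  have hmeas : Measurable (fun y : EuclideanSpace ℝ (Fin d) => ‖y - x‖ ^ (-s)) :=
    (measurable_id.sub_const x).norm.pow_const _
  have hmap := aux_restrict_ball_map x t
  have hcomp : (fun y : EuclideanSpace ℝ (Fin d) => ‖y - x‖ ^ (-s)) ∘ (· + x) =
      fun w => ‖w‖ ^ (-s) := by
    ext w; simp [add_sub_cancel_right]
  constructor
  · rw [IntegrableOn, hmap, integrable_map_measure hmeas.aestronglyMeasurable
      (measurable_add_const x).aemeasurable]
    rw [hcomp]
    exact aux_integrableOn_norm_rpow_ball hd hs0 hsd t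
  · rw [hmap, integral_map (measurable_add_const x).aemeasurable hmeas.aestronglyMeasurable]
    simp [add_sub_cancel_right]

lemma aux_kernel {d : ℕ} (hd : 0 < d) {s : ℝ} (hs0 : 0 ≤ s) (hsd : s < d)
    {D : Set (EuclideanSpace ℝ (Fin d))} {r : ℝ} (hr : 0 < r) (hD : D ⊆ ball 0 r)
    {x : EuclideanSpace ℝ (Fin d)} (hx : x ∈ D) :
    IntegrableOn (fun y => ‖x - y‖ ^ (-s)) D ∧
      ∫ y in D, ‖x - y‖ ^ (-s) ≤
        ∫ w in ball (0 : EuclideanSpace ℝ (Fin d)) (2 * r), ‖w‖ ^ (-s) := by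
  have hsub : D ⊆ ball x (2 * r) := by
    intro y hy
    have h1 := mem_ball.1 (hD hy)
    have h2 := mem_ball.1 (hD hx)
    rw [mem_ball]
    calc dist y x ≤ dist y 0 + dist 0 x := dist_triangle _ _ _
      _ < r + r := by rw [dist_comm (0:EuclideanSpace ℝ (Fin d)) x]; exact add_lt_add h1 h2
      _ = 2 * r := by ring
  obtain ⟨hint, heq⟩ := aux_shift hd hs0 hsd x (2 * r)
  have hrev : (fun y : EuclideanSpace ℝ (Fin d) => ‖x - y‖ ^ (-s)) =
      fun y => ‖y - x‖ ^ (-s) := by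
    ext y; rw [norm_sub_rev]
  rw [hrev]
  refine ⟨hint.mono_set hsub, ?_⟩
  rw [← heq]
  refine setIntegral_mono_set hint ?_ (HasSubset.Subset.eventuallyLE hsub)
  exact Filter.Eventually.of_forall fun y => Real.rpow_nonneg (norm_nonneg _) _

set_option maxHeartbeats 2000000 in
lemma aux_key {d : ℕ} (hd0 : 0 < d)
    (D : Set (EuclideanSpace ℝ (Fin d))) (hDm : MeasurableSet D)
    {r : ℝ} (hr : 0 < r) (hD : D ⊆ ball 0 r)
    (G : EuclideanSpace ℝ (Fin d) → EuclideanSpace ℝ (Fin d) → ℝ)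
    (hGmeas : Measurable (Function.uncurry G))
    {A : ℝ} (hA0 : 0 ≤ A) {s : ℝ} (hs0 : 0 ≤ s) (h2s : 2 * s < d)
    (hG : ∀ x ∈ D, ∀ y ∈ D, x ≠ y → |G x y| ≤ A * ‖x - y‖ ^ (-s))
    (u : EuclideanSpace ℝ (Fin d) → ℝ) (humeas : Measurable u) (C : ℝ) (hC : 0 < C)
    (hu : ∀ x, |u x| ≤ C)
    (R : EuclideanSpace ℝ (Fin d) → ℝ) (hRmeas : Measurable R)
    (hRint : Integrable R) (hRbdd : ∀ x, |R x| ≤ C)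
    {Ω : Type*} [MeasurableSpace Ω] (P : Measure Ω) [IsProbabilityMeasure P]
    (ν : ℝ → EuclideanSpace ℝ (Fin d) → Ω → ℝ)
    (hνmeas : ∀ ε, Measurable
      (Function.uncurry (ν ε) : EuclideanSpace ℝ (Fin d) × Ω → ℝ))
    (hνbdd : ∀ ε y ω, |ν ε y ω| ≤ C)
    (hνcov : ∀ ε ∈ Set.Ioc (0:ℝ) 1, ∀ y z,
      ∫ ω, ν ε y ω * ν ε z ω ∂P = R (ε⁻¹ • (y - z))) :
    ∃ C' : ℝ, 0 < C' ∧ ∀ ε ∈ Set.Ioc (0:ℝ) 1,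
      (∫ ω, (∫ x in D, (-∫ y in D, G x y * ν ε y ω * u y) ^ 2) ∂P) ≤ C' * ε ^ d := by
  have hsd : s < (d : ℝ) := by linarith
  haveI hne : Nontrivial (EuclideanSpace ℝ (Fin d)) := by
    have h : 0 < Module.finrank ℝ (EuclideanSpace ℝ (Fin d)) := by
      rw [finrank_euclideanSpace_fin]; exact hd0
    exact Module.nontrivial_of_finrank_pos h
  have h2s0 : (0:ℝ) ≤ 2 * s := by linarith
  have hE : True := trivial
  set M1 : ℝ := ∫ w in ball (0 : EuclideanSpace ℝ (Fin d)) (2 * r), ‖w‖ ^ (-s) with hM1def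
  set M2 : ℝ := ∫ w in ball (0 : EuclideanSpace ℝ (Fin d)) (2 * r), ‖w‖ ^ (-(2*s)) with hM2def
  have hM1 : 0 ≤ M1 := integral_nonneg fun w => Real.rpow_nonneg (norm_nonneg _) _
  have hM2 : 0 ≤ M2 := integral_nonneg fun w => Real.rpow_nonneg (norm_nonneg _) _
  set Rl : ℝ := ∫ w : EuclideanSpace ℝ (Fin d), |R w| with hRldef
  have hRl : 0 ≤ Rl := integral_nonneg fun w => abs_nonneg _
  have hDfin : volume D < ⊤ := lt_of_le_of_lt (measure_mono hD) measure_ball_lt_top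
  haveI : IsFiniteMeasure (volume.restrict D) :=
    ⟨by rwa [Measure.restrict_apply_univ]⟩
  set K : ℝ := C^2 * A^2 * Rl * M2 with hKdef
  have hK0 : 0 ≤ K := by positivity
  have hvolK : 0 ≤ (volume D).toReal * K := mul_nonneg ENNReal.toReal_nonneg hK0
  refine ⟨(volume D).toReal * K + 1, by linarith, ?_⟩
  rintro ε ⟨hε0, hε1⟩
  have hεd : (0:ℝ) ≤ ε ^ d := by positivity
  -- scaling bound for the R integral
  have hRcomp : Integrable (fun w : EuclideanSpace ℝ (Fin d) => |R (ε⁻¹ • w)|) volume := by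
    exact ((integrable_comp_smul_iff volume R (inv_ne_zero (ne_of_gt hε0))).2 hRint).abs
  have hRscale : (∫ w : EuclideanSpace ℝ (Fin d), |R (ε⁻¹ • w)|) = ε ^ d * Rl := by
    have h := Measure.integral_comp_inv_smul_of_nonneg
      (volume : Measure (EuclideanSpace ℝ (Fin d))) (fun w => |R w|) hε0.le
    rw [finrank_euclideanSpace_fin] at h
    rw [hRldef]
    rw [smul_eq_mul] at h
    exact h
  have hR1 : ∀ y : EuclideanSpace ℝ (Fin d), (∫ z in D, |R (ε⁻¹ • (y - z))|) ≤ ε ^ d * Rl := by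
    intro y
    have hmp : MeasurePreserving (fun z : EuclideanSpace ℝ (Fin d) => y - z) volume volume :=
      Measure.measurePreserving_sub_left volume y
    have hint : Integrable (fun z : EuclideanSpace ℝ (Fin d) => |R (ε⁻¹ • (y - z))|) volume := by
      have := (hmp.integrable_comp hRcomp.aestronglyMeasurable).2 hRcomp
      exact this
    calc (∫ z in D, |R (ε⁻¹ • (y - z))|) ≤ ∫ z : EuclideanSpace ℝ (Fin d), |R (ε⁻¹ • (y - z))| :=
          setIntegral_le_integral hint (Filter.Eventually.of_forall fun z => abs_nonneg _)
      _ = ∫ w : EuclideanSpace ℝ (Fin d), |R (ε⁻¹ • w)| :=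
          integral_sub_left_eq_self (fun w => |R (ε⁻¹ • w)|) volume y
      _ = ε ^ d * Rl := hRscale
  have hR2 : ∀ z : EuclideanSpace ℝ (Fin d), (∫ y in D, |R (ε⁻¹ • (y - z))|) ≤ ε ^ d * Rl := by
    intro z
    have hmp : MeasurePreserving (fun y : EuclideanSpace ℝ (Fin d) => y - z) volume volume :=
      measurePreserving_sub_right volume z
    have hint : Integrable (fun y : EuclideanSpace ℝ (Fin d) => |R (ε⁻¹ • (y - z))|) volume := by
      have := (hmp.integrable_comp hRcomp.aestronglyMeasurable).2 hRcomp
      exact this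
    calc (∫ y in D, |R (ε⁻¹ • (y - z))|) ≤ ∫ y : EuclideanSpace ℝ (Fin d), |R (ε⁻¹ • (y - z))| :=
          setIntegral_le_integral hint (Filter.Eventually.of_forall fun y => abs_nonneg _)
      _ = ∫ w : EuclideanSpace ℝ (Fin d), |R (ε⁻¹ • w)| :=
          integral_sub_right_eq_self (fun w => |R (ε⁻¹ • w)|) z
      _ = ε ^ d * Rl := hRscale
  -- per-x bound
  have hJbd : ∀ x ∈ D, (∫ ω, (∫ y in D, G x y * ν ε y ω * u y) ^ 2 ∂P) ≤ K * ε ^ d := by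
    intro x hx
    obtain ⟨k1int, k1bd⟩ := aux_kernel hd0 hs0 hsd hr hD hx
    obtain ⟨k2int, k2bd⟩ := aux_kernel hd0 h2s0 h2s hr hD hx
    have hkmeas : Measurable (fun y : EuclideanSpace ℝ (Fin d) => ‖x - y‖ ^ (-s)) :=
      (measurable_const.sub measurable_id).norm.pow_const _
    have hk2meas : Measurable (fun y : EuclideanSpace ℝ (Fin d) => ‖x - y‖ ^ (-(2*s))) :=
      (measurable_const.sub measurable_id).norm.pow_const _
    have hknn : ∀ y : EuclideanSpace ℝ (Fin d), 0 ≤ ‖x - y‖ ^ (-s) :=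
      fun y => Real.rpow_nonneg (norm_nonneg _) _
    have hk2nn : ∀ y : EuclideanSpace ℝ (Fin d), 0 ≤ ‖x - y‖ ^ (-(2*s)) :=
      fun y => Real.rpow_nonneg (norm_nonneg _) _
    have hae_y : ∀ᵐ y ∂(volume.restrict D), y ∈ D ∧ y ≠ x := by
      have h1 : ∀ᵐ (y : EuclideanSpace ℝ (Fin d)) ∂volume, y ≠ x := by
        have he : {y : EuclideanSpace ℝ (Fin d) | ¬ y ≠ x} = {x} := by ext; simp
        rw [ae_iff, he]; exact measure_singleton x
      exact (ae_restrict_mem hDm).and (ae_restrict_of_ae h1)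
    have hGb : ∀ᵐ y ∂(volume.restrict D), |G x y| ≤ A * ‖x - y‖ ^ (-s) := by
      filter_upwards [hae_y] with y hy
      exact hG x hx y hy.1 (Ne.symm hy.2)
    have hφb : ∀ᵐ y ∂(volume.restrict D), ∀ ω,
        |G x y * ν ε y ω * u y| ≤ A * C ^ 2 * ‖x - y‖ ^ (-s) := by
      filter_upwards [hGb] with y hy ω
      have h1 : |G x y * ν ε y ω * u y| = |G x y| * |ν ε y ω| * |u y| := by
        rw [abs_mul, abs_mul]
      rw [h1]
      calc |G x y| * |ν ε y ω| * |u y| ≤ (A * ‖x - y‖ ^ (-s)) * C * C := by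
            have h2 : |G x y| * |ν ε y ω| ≤ (A * ‖x - y‖ ^ (-s)) * C :=
              mul_le_mul hy (hνbdd ε y ω) (abs_nonneg _)
                (mul_nonneg hA0 (hknn y))
            exact mul_le_mul h2 (hu y) (abs_nonneg _)
              (mul_nonneg (mul_nonneg hA0 (hknn y)) hC.le)
        _ = A * C ^ 2 * ‖x - y‖ ^ (-s) := by ring
    have hφmeas : ∀ ω, Measurable (fun y => G x y * ν ε y ω * u y) := fun ω =>
      ((hGmeas.comp (measurable_const.prodMk measurable_id)).mul
        ((hνmeas ε).comp (measurable_id.prodMk measurable_const))).mul humeas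
    -- square as double integral
    have hsq : ∀ ω, (∫ y in D, G x y * ν ε y ω * u y) ^ 2 =
        ∫ p : EuclideanSpace ℝ (Fin d) × EuclideanSpace ℝ (Fin d),
          (G x p.1 * ν ε p.1 ω * u p.1) * (G x p.2 * ν ε p.2 ω * u p.2)
          ∂((volume.restrict D).prod (volume.restrict D)) := by
      intro ω
      rw [sq, ← integral_prod_mul]
    have hHint : Integrable
        (fun p : EuclideanSpace ℝ (Fin d) × EuclideanSpace ℝ (Fin d) =>
          ‖x - p.1‖ ^ (-s) * ‖x - p.2‖ ^ (-s))
        ((volume.restrict D).prod (volume.restrict D)) := k1int.mul_prod k1int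
    have hgmeas : Measurable (fun q : Ω × (EuclideanSpace ℝ (Fin d) × EuclideanSpace ℝ (Fin d)) =>
        (G x q.2.1 * ν ε q.2.1 q.1 * u q.2.1) * (G x q.2.2 * ν ε q.2.2 q.1 * u q.2.2)) := by
      have hm1 : Measurable (fun q : Ω × (EuclideanSpace ℝ (Fin d) × EuclideanSpace ℝ (Fin d)) =>
          G x q.2.1 * ν ε q.2.1 q.1 * u q.2.1) :=
        ((hGmeas.comp (measurable_const.prodMk (measurable_fst.comp measurable_snd))).mul
          ((hνmeas ε).comp ((measurable_fst.comp measurable_snd).prodMk measurable_fst))).mul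
          (humeas.comp (measurable_fst.comp measurable_snd))
      have hm2 : Measurable (fun q : Ω × (EuclideanSpace ℝ (Fin d) × EuclideanSpace ℝ (Fin d)) =>
          G x q.2.2 * ν ε q.2.2 q.1 * u q.2.2) :=
        ((hGmeas.comp (measurable_const.prodMk (measurable_snd.comp measurable_snd))).mul
          ((hνmeas ε).comp ((measurable_snd.comp measurable_snd).prodMk measurable_fst))).mul
          (humeas.comp (measurable_snd.comp measurable_snd))
      exact hm1.mul hm2
    have haeq : ∀ᵐ q ∂(P.prod ((volume.restrict D).prod (volume.restrict D))),
        (q.2.1 ∈ D ∧ q.2.1 ≠ x) ∧ (q.2.2 ∈ D ∧ q.2.2 ≠ x) := by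
      rw [Measure.ae_prod_iff_ae_ae]
      · refine Filter.Eventually.of_forall fun ω => ?_
        rw [Measure.ae_prod_iff_ae_ae]
        · filter_upwards [hae_y] with a ha
          filter_upwards [hae_y] with b hb
          exact ⟨ha, hb⟩
        · have : MeasurableSet {p : EuclideanSpace ℝ (Fin d) × EuclideanSpace ℝ (Fin d) |
              (p.1 ∈ D ∧ p.1 ≠ x) ∧ (p.2 ∈ D ∧ p.2 ≠ x)} := by
            refine MeasurableSet.inter (MeasurableSet.inter ?_ ?_) (MeasurableSet.inter ?_ ?_)
            · exact measurable_fst hDm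
            · exact (measurable_fst (measurableSet_singleton x)).compl
            · exact measurable_snd hDm
            · exact (measurable_snd (measurableSet_singleton x)).compl
          exact this
      · have : MeasurableSet {q : Ω × (EuclideanSpace ℝ (Fin d) × EuclideanSpace ℝ (Fin d)) |
            (q.2.1 ∈ D ∧ q.2.1 ≠ x) ∧ (q.2.2 ∈ D ∧ q.2.2 ≠ x)} := by
          refine MeasurableSet.inter (MeasurableSet.inter ?_ ?_) (MeasurableSet.inter ?_ ?_)
          · exact measurable_snd (measurable_fst hDm)
          · exact measurable_snd ((measurable_fst (measurableSet_singleton x)).compl)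
          · exact measurable_snd (measurable_snd hDm)
          · exact measurable_snd ((measurable_snd (measurableSet_singleton x)).compl)
        exact this
    have hφb' : ∀ (y : EuclideanSpace ℝ (Fin d)), y ∈ D → y ≠ x → ∀ ω,
        |G x y * ν ε y ω * u y| ≤ A * C ^ 2 * ‖x - y‖ ^ (-s) := by
      intro y hyD hyx ω
      have hy := hG x hx y hyD (Ne.symm hyx)
      have h1 : |G x y * ν ε y ω * u y| = |G x y| * |ν ε y ω| * |u y| := by
        rw [abs_mul, abs_mul]
      rw [h1]
      calc |G x y| * |ν ε y ω| * |u y| ≤ (A * ‖x - y‖ ^ (-s)) * C * C := by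
            have h2 : |G x y| * |ν ε y ω| ≤ (A * ‖x - y‖ ^ (-s)) * C :=
              mul_le_mul hy (hνbdd ε y ω) (abs_nonneg _)
                (mul_nonneg hA0 (hknn y))
            exact mul_le_mul h2 (hu y) (abs_nonneg _)
              (mul_nonneg (mul_nonneg hA0 (hknn y)) hC.le)
        _ = A * C ^ 2 * ‖x - y‖ ^ (-s) := by ring
    have hgint : Integrable
        (fun q : Ω × (EuclideanSpace ℝ (Fin d) × EuclideanSpace ℝ (Fin d)) =>
          (G x q.2.1 * ν ε q.2.1 q.1 * u q.2.1) * (G x q.2.2 * ν ε q.2.2 q.1 * u q.2.2))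
        (P.prod ((volume.restrict D).prod (volume.restrict D))) := by
      have hmaj : Integrable
          (fun q : Ω × (EuclideanSpace ℝ (Fin d) × EuclideanSpace ℝ (Fin d)) =>
            ((A * C ^ 2) ^ 2 : ℝ) * (‖x - q.2.1‖ ^ (-s) * ‖x - q.2.2‖ ^ (-s)))
          (P.prod ((volume.restrict D).prod (volume.restrict D))) :=
        (integrable_const ((A * C ^ 2) ^ 2 : ℝ)).mul_prod hHint
      refine hmaj.mono' hgmeas.aestronglyMeasurable ?_
      filter_upwards [haeq] with q hq
      rw [Real.norm_eq_abs, abs_mul]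
      have b1 := hφb' q.2.1 hq.1.1 hq.1.2 q.1
      have b2 := hφb' q.2.2 hq.2.1 hq.2.2 q.1
      calc |G x q.2.1 * ν ε q.2.1 q.1 * u q.2.1| * |G x q.2.2 * ν ε q.2.2 q.1 * u q.2.2|
          ≤ (A * C ^ 2 * ‖x - q.2.1‖ ^ (-s)) * (A * C ^ 2 * ‖x - q.2.2‖ ^ (-s)) :=
            mul_le_mul b1 b2 (abs_nonneg _)
              (mul_nonneg (mul_nonneg hA0 (by positivity)) (hknn q.2.1))
        _ = (A * C ^ 2) ^ 2 * (‖x - q.2.1‖ ^ (-s) * ‖x - q.2.2‖ ^ (-s)) := by ring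
    have hswap := integral_integral_swap
      (f := fun ω (p : EuclideanSpace ℝ (Fin d) × EuclideanSpace ℝ (Fin d)) =>
        (G x p.1 * ν ε p.1 ω * u p.1) * (G x p.2 * ν ε p.2 ω * u p.2)) hgint
    have hinner : ∀ p : EuclideanSpace ℝ (Fin d) × EuclideanSpace ℝ (Fin d),
        (∫ ω, (G x p.1 * ν ε p.1 ω * u p.1) * (G x p.2 * ν ε p.2 ω * u p.2) ∂P) =
          ((G x p.1 * u p.1) * (G x p.2 * u p.2)) * R (ε⁻¹ • (p.1 - p.2)) := by
      intro p
      have heq : ∀ ω, (G x p.1 * ν ε p.1 ω * u p.1) * (G x p.2 * ν ε p.2 ω * u p.2) =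
          ((G x p.1 * u p.1) * (G x p.2 * u p.2)) * (ν ε p.1 ω * ν ε p.2 ω) := fun ω => by ring
      rw [integral_congr_ae (Filter.Eventually.of_forall heq), integral_const_mul,
        hνcov ε ⟨hε0, hε1⟩ p.1 p.2]
    -- majorants
    have hRt_meas : Measurable (fun p : EuclideanSpace ℝ (Fin d) × EuclideanSpace ℝ (Fin d) =>
        |R (ε⁻¹ • (p.1 - p.2))|) :=
      (hRmeas.comp ((measurable_fst.sub measurable_snd).const_smul ε⁻¹)).abs
    have h1int : Integrable
        (fun p : EuclideanSpace ℝ (Fin d) × EuclideanSpace ℝ (Fin d) =>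
          ‖x - p.1‖ ^ (-(2*s)) * |R (ε⁻¹ • (p.1 - p.2))|)
        ((volume.restrict D).prod (volume.restrict D)) := by
      refine (k2int.mul_prod (integrable_const C)).mono'
        ((hk2meas.comp measurable_fst).mul hRt_meas).aestronglyMeasurable ?_
      refine Filter.Eventually.of_forall fun p => ?_
      rw [Real.norm_eq_abs, abs_mul, abs_of_nonneg (hk2nn _), abs_abs]
      exact mul_le_mul_of_nonneg_left (hRbdd _) (hk2nn _)
    have h2int : Integrable
        (fun p : EuclideanSpace ℝ (Fin d) × EuclideanSpace ℝ (Fin d) =>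
          ‖x - p.2‖ ^ (-(2*s)) * |R (ε⁻¹ • (p.1 - p.2))|)
        ((volume.restrict D).prod (volume.restrict D)) := by
      refine ((integrable_const C).mul_prod k2int).mono'
        ((hk2meas.comp measurable_snd).mul hRt_meas).aestronglyMeasurable ?_
      refine Filter.Eventually.of_forall fun p => ?_
      rw [Real.norm_eq_abs, abs_mul, abs_of_nonneg (hk2nn _), abs_abs, mul_comm C _]
      exact mul_le_mul_of_nonneg_left (hRbdd _) (hk2nn _)
    have hsqpow : ∀ w : EuclideanSpace ℝ (Fin d), (‖x - w‖ ^ (-s)) ^ 2 = ‖x - w‖ ^ (-(2*s)) := by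
      intro w
      rw [← Real.rpow_natCast (‖x - w‖ ^ (-s)) 2, ← Real.rpow_mul (norm_nonneg _)]
      congr 1
      push_cast
      ring
    have haePP : ∀ᵐ p ∂((volume.restrict D).prod (volume.restrict D)),
        (p.1 ∈ D ∧ p.1 ≠ x) ∧ (p.2 ∈ D ∧ p.2 ≠ x) := by
      rw [Measure.ae_prod_iff_ae_ae]
      · filter_upwards [hae_y] with a ha
        filter_upwards [hae_y] with b hb
        exact ⟨ha, hb⟩
      · refine MeasurableSet.inter (MeasurableSet.inter ?_ ?_) (MeasurableSet.inter ?_ ?_)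
        · exact measurable_fst hDm
        · exact (measurable_fst (measurableSet_singleton x)).compl
        · exact measurable_snd hDm
        · exact (measurable_snd (measurableSet_singleton x)).compl
    have hpt : ∀ p : EuclideanSpace ℝ (Fin d) × EuclideanSpace ℝ (Fin d),
        p.1 ∈ D → p.1 ≠ x → p.2 ∈ D → p.2 ≠ x →
        |((G x p.1 * u p.1) * (G x p.2 * u p.2)) * R (ε⁻¹ • (p.1 - p.2))| ≤
          (A ^ 2 * C ^ 2 / 2) *
            (‖x - p.1‖ ^ (-(2*s)) * |R (ε⁻¹ • (p.1 - p.2))| +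
             ‖x - p.2‖ ^ (-(2*s)) * |R (ε⁻¹ • (p.1 - p.2))|) := by
      intro p h1D h1x h2D h2x
      have ha0 : 0 ≤ ‖x - p.1‖ ^ (-s) := hknn p.1
      have hb0 : 0 ≤ ‖x - p.2‖ ^ (-s) := hknn p.2
      have hρ0 : 0 ≤ |R (ε⁻¹ • (p.1 - p.2))| := abs_nonneg _
      have hg1 : |G x p.1 * u p.1| ≤ A * C * ‖x - p.1‖ ^ (-s) := by
        rw [abs_mul]
        calc |G x p.1| * |u p.1| ≤ (A * ‖x - p.1‖ ^ (-s)) * C :=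
              mul_le_mul (hG x hx p.1 h1D (Ne.symm h1x)) (hu p.1) (abs_nonneg _)
                (mul_nonneg hA0 ha0)
          _ = A * C * ‖x - p.1‖ ^ (-s) := by ring
      have hg2 : |G x p.2 * u p.2| ≤ A * C * ‖x - p.2‖ ^ (-s) := by
        rw [abs_mul]
        calc |G x p.2| * |u p.2| ≤ (A * ‖x - p.2‖ ^ (-s)) * C :=
              mul_le_mul (hG x hx p.2 h2D (Ne.symm h2x)) (hu p.2) (abs_nonneg _)
                (mul_nonneg hA0 hb0)
          _ = A * C * ‖x - p.2‖ ^ (-s) := by ring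
      have hprod : |(G x p.1 * u p.1) * (G x p.2 * u p.2)| ≤
          (A * C * ‖x - p.1‖ ^ (-s)) * (A * C * ‖x - p.2‖ ^ (-s)) := by
        rw [abs_mul]
        exact mul_le_mul hg1 hg2 (abs_nonneg _) (mul_nonneg (mul_nonneg hA0 hC.le) ha0)
      have hab : ‖x - p.1‖ ^ (-s) * ‖x - p.2‖ ^ (-s) ≤
          ((‖x - p.1‖ ^ (-s)) ^ 2 + (‖x - p.2‖ ^ (-s)) ^ 2) / 2 := by
        nlinarith [sq_nonneg (‖x - p.1‖ ^ (-s) - ‖x - p.2‖ ^ (-s))]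
      calc |((G x p.1 * u p.1) * (G x p.2 * u p.2)) * R (ε⁻¹ • (p.1 - p.2))|
          = |(G x p.1 * u p.1) * (G x p.2 * u p.2)| * |R (ε⁻¹ • (p.1 - p.2))| := abs_mul _ _
        _ ≤ ((A * C * ‖x - p.1‖ ^ (-s)) * (A * C * ‖x - p.2‖ ^ (-s))) *
              |R (ε⁻¹ • (p.1 - p.2))| := mul_le_mul_of_nonneg_right hprod hρ0
        _ = (A ^ 2 * C ^ 2) * (‖x - p.1‖ ^ (-s) * ‖x - p.2‖ ^ (-s)) *
              |R (ε⁻¹ • (p.1 - p.2))| := by ring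
        _ ≤ (A ^ 2 * C ^ 2) * (((‖x - p.1‖ ^ (-s)) ^ 2 + (‖x - p.2‖ ^ (-s)) ^ 2) / 2) *
              |R (ε⁻¹ • (p.1 - p.2))| := by
            refine mul_le_mul_of_nonneg_right ?_ hρ0
            exact mul_le_mul_of_nonneg_left hab (by positivity)
        _ = (A ^ 2 * C ^ 2 / 2) *
              ((‖x - p.1‖ ^ (-s)) ^ 2 * |R (ε⁻¹ • (p.1 - p.2))| +
               (‖x - p.2‖ ^ (-s)) ^ 2 * |R (ε⁻¹ • (p.1 - p.2))|) := by ring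
        _ = _ := by rw [hsqpow p.1, hsqpow p.2]
    have hmain : (∫ ω, (∫ y in D, G x y * ν ε y ω * u y) ^ 2 ∂P) =
        ∫ p, ((G x p.1 * u p.1) * (G x p.2 * u p.2)) * R (ε⁻¹ • (p.1 - p.2))
          ∂((volume.restrict D).prod (volume.restrict D)) := by
      calc (∫ ω, (∫ y in D, G x y * ν ε y ω * u y) ^ 2 ∂P)
          = ∫ ω, ∫ p : EuclideanSpace ℝ (Fin d) × EuclideanSpace ℝ (Fin d),
              (G x p.1 * ν ε p.1 ω * u p.1) * (G x p.2 * ν ε p.2 ω * u p.2)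
              ∂((volume.restrict D).prod (volume.restrict D)) ∂P :=
            integral_congr_ae (Filter.Eventually.of_forall hsq)
        _ = ∫ p : EuclideanSpace ℝ (Fin d) × EuclideanSpace ℝ (Fin d),
              ∫ ω, (G x p.1 * ν ε p.1 ω * u p.1) * (G x p.2 * ν ε p.2 ω * u p.2) ∂P
              ∂((volume.restrict D).prod (volume.restrict D)) := hswap
        _ = _ := integral_congr_ae (Filter.Eventually.of_forall hinner)
    have hT1 : (∫ p, ‖x - p.1‖ ^ (-(2*s)) * |R (ε⁻¹ • (p.1 - p.2))|
        ∂((volume.restrict D).prod (volume.restrict D))) ≤ (ε ^ d * Rl) * M2 := by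
      rw [integral_prod _ h1int]
      have hin : ∀ y : EuclideanSpace ℝ (Fin d),
          (∫ z in D, ‖x - y‖ ^ (-(2*s)) * |R (ε⁻¹ • (y - z))|) =
            ‖x - y‖ ^ (-(2*s)) * ∫ z in D, |R (ε⁻¹ • (y - z))| :=
        fun y => integral_const_mul _ _
      calc (∫ y in D, ∫ z in D, ‖x - y‖ ^ (-(2*s)) * |R (ε⁻¹ • (y - z))|)
          = ∫ y in D, ‖x - y‖ ^ (-(2*s)) * ∫ z in D, |R (ε⁻¹ • (y - z))| :=
            integral_congr_ae (Filter.Eventually.of_forall hin)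
        _ ≤ ∫ y in D, ‖x - y‖ ^ (-(2*s)) * (ε ^ d * Rl) := by
            refine integral_mono_of_nonneg
              (Filter.Eventually.of_forall fun y =>
                mul_nonneg (hk2nn y) (integral_nonneg fun z => abs_nonneg _))
              (k2int.mul_const _) ?_
            exact Filter.Eventually.of_forall fun y =>
              mul_le_mul_of_nonneg_left (hR1 y) (hk2nn y)
        _ = (∫ y in D, ‖x - y‖ ^ (-(2*s))) * (ε ^ d * Rl) := integral_mul_const _ _
        _ ≤ M2 * (ε ^ d * Rl) := by
            exact mul_le_mul_of_nonneg_right k2bd (mul_nonneg hεd hRl)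
        _ = (ε ^ d * Rl) * M2 := by ring
    have hT2 : (∫ p, ‖x - p.2‖ ^ (-(2*s)) * |R (ε⁻¹ • (p.1 - p.2))|
        ∂((volume.restrict D).prod (volume.restrict D))) ≤ (ε ^ d * Rl) * M2 := by
      rw [integral_prod_symm _ h2int]
      have hin : ∀ z : EuclideanSpace ℝ (Fin d),
          (∫ y in D, ‖x - z‖ ^ (-(2*s)) * |R (ε⁻¹ • (y - z))|) =
            ‖x - z‖ ^ (-(2*s)) * ∫ y in D, |R (ε⁻¹ • (y - z))| :=
        fun z => integral_const_mul _ _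
      calc (∫ z in D, ∫ y in D, ‖x - z‖ ^ (-(2*s)) * |R (ε⁻¹ • (y - z))|)
          = ∫ z in D, ‖x - z‖ ^ (-(2*s)) * ∫ y in D, |R (ε⁻¹ • (y - z))| :=
            integral_congr_ae (Filter.Eventually.of_forall hin)
        _ ≤ ∫ z in D, ‖x - z‖ ^ (-(2*s)) * (ε ^ d * Rl) := by
            refine integral_mono_of_nonneg
              (Filter.Eventually.of_forall fun z =>
                mul_nonneg (hk2nn z) (integral_nonneg fun y => abs_nonneg _))
              (k2int.mul_const _) ?_
            exact Filter.Eventually.of_forall fun z =>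
              mul_le_mul_of_nonneg_left (hR2 z) (hk2nn z)
        _ = (∫ z in D, ‖x - z‖ ^ (-(2*s))) * (ε ^ d * Rl) := integral_mul_const _ _
        _ ≤ M2 * (ε ^ d * Rl) := by
            exact mul_le_mul_of_nonneg_right k2bd (mul_nonneg hεd hRl)
        _ = (ε ^ d * Rl) * M2 := by ring
    rw [hmain]
    have habs : (∫ p, ((G x p.1 * u p.1) * (G x p.2 * u p.2)) * R (ε⁻¹ • (p.1 - p.2))
        ∂((volume.restrict D).prod (volume.restrict D))) ≤
        ∫ p, |((G x p.1 * u p.1) * (G x p.2 * u p.2)) * R (ε⁻¹ • (p.1 - p.2))|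
        ∂((volume.restrict D).prod (volume.restrict D)) := by
      refine le_trans (le_abs_self _) ?_
      have := norm_integral_le_integral_norm
        (f := fun p : EuclideanSpace ℝ (Fin d) × EuclideanSpace ℝ (Fin d) =>
          ((G x p.1 * u p.1) * (G x p.2 * u p.2)) * R (ε⁻¹ • (p.1 - p.2)))
        (μ := (volume.restrict D).prod (volume.restrict D))
      simpa only [Real.norm_eq_abs] using this
    refine le_trans habs ?_
    calc (∫ p, |((G x p.1 * u p.1) * (G x p.2 * u p.2)) * R (ε⁻¹ • (p.1 - p.2))|
          ∂((volume.restrict D).prod (volume.restrict D)))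
        ≤ ∫ p, (A ^ 2 * C ^ 2 / 2) *
            (‖x - p.1‖ ^ (-(2*s)) * |R (ε⁻¹ • (p.1 - p.2))| +
             ‖x - p.2‖ ^ (-(2*s)) * |R (ε⁻¹ • (p.1 - p.2))|)
          ∂((volume.restrict D).prod (volume.restrict D)) := by
          refine integral_mono_of_nonneg
            (Filter.Eventually.of_forall fun p => abs_nonneg _)
            ((h1int.add h2int).const_mul _) ?_
          filter_upwards [haePP] with p hp
          exact hpt p hp.1.1 hp.1.2 hp.2.1 hp.2.2
      _ = (A ^ 2 * C ^ 2 / 2) *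
            ((∫ p, ‖x - p.1‖ ^ (-(2*s)) * |R (ε⁻¹ • (p.1 - p.2))|
              ∂((volume.restrict D).prod (volume.restrict D))) +
             (∫ p, ‖x - p.2‖ ^ (-(2*s)) * |R (ε⁻¹ • (p.1 - p.2))|
              ∂((volume.restrict D).prod (volume.restrict D)))) := by
          rw [integral_const_mul, integral_add h1int h2int]
      _ ≤ (A ^ 2 * C ^ 2 / 2) * ((ε ^ d * Rl) * M2 + (ε ^ d * Rl) * M2) := by
          refine mul_le_mul_of_nonneg_left ?_ (by positivity)
          exact add_le_add hT1 hT2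
      _ = K * ε ^ d := by rw [hKdef]; ring
  -- uniform bound on the inner integral
  have hFbd : ∀ x ∈ D, ∀ ω, |∫ y in D, G x y * ν ε y ω * u y| ≤ A * C ^ 2 * M1 := by
    intro x hx ω
    obtain ⟨k1int, k1bd⟩ := aux_kernel hd0 hs0 hsd hr hD hx
    have hknn : ∀ y : EuclideanSpace ℝ (Fin d), 0 ≤ ‖x - y‖ ^ (-s) :=
      fun y => Real.rpow_nonneg (norm_nonneg _) _
    have hae_y : ∀ᵐ y ∂(volume.restrict D), y ∈ D ∧ y ≠ x := by
      have h1 : ∀ᵐ (y : EuclideanSpace ℝ (Fin d)) ∂volume, y ≠ x := by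
        have he : {y : EuclideanSpace ℝ (Fin d) | ¬ y ≠ x} = {x} := by ext; simp
        rw [ae_iff, he]; exact measure_singleton x
      exact (ae_restrict_mem hDm).and (ae_restrict_of_ae h1)
    have hb : ∀ᵐ y ∂(volume.restrict D),
        |G x y * ν ε y ω * u y| ≤ A * C ^ 2 * ‖x - y‖ ^ (-s) := by
      filter_upwards [hae_y] with y hy
      have hGy := hG x hx y hy.1 (Ne.symm hy.2)
      have h1 : |G x y * ν ε y ω * u y| = |G x y| * |ν ε y ω| * |u y| := by
        rw [abs_mul, abs_mul]
      rw [h1]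
      calc |G x y| * |ν ε y ω| * |u y| ≤ (A * ‖x - y‖ ^ (-s)) * C * C := by
            have h2 : |G x y| * |ν ε y ω| ≤ (A * ‖x - y‖ ^ (-s)) * C :=
              mul_le_mul hGy (hνbdd ε y ω) (abs_nonneg _) (mul_nonneg hA0 (hknn y))
            exact mul_le_mul h2 (hu y) (abs_nonneg _)
              (mul_nonneg (mul_nonneg hA0 (hknn y)) hC.le)
        _ = A * C ^ 2 * ‖x - y‖ ^ (-s) := by ring
    calc |∫ y in D, G x y * ν ε y ω * u y|
        ≤ ∫ y in D, |G x y * ν ε y ω * u y| := by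
          have := norm_integral_le_integral_norm
            (f := fun y => G x y * ν ε y ω * u y) (μ := volume.restrict D)
          simpa only [Real.norm_eq_abs] using this
      _ ≤ ∫ y in D, A * C ^ 2 * ‖x - y‖ ^ (-s) :=
          integral_mono_of_nonneg (Filter.Eventually.of_forall fun y => abs_nonneg _)
            (k1int.const_mul _) hb
      _ = A * C ^ 2 * ∫ y in D, ‖x - y‖ ^ (-s) := integral_const_mul _ _
      _ ≤ A * C ^ 2 * M1 := mul_le_mul_of_nonneg_left k1bd (mul_nonneg hA0 (by positivity))
  -- measurability of the corrector
  have hFmeas : StronglyMeasurable (fun q : Ω × (EuclideanSpace ℝ (Fin d)) =>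
      ∫ y in D, G q.2 y * ν ε y q.1 * u y) := by
    have hm : Measurable (fun q : (Ω × (EuclideanSpace ℝ (Fin d))) × EuclideanSpace ℝ (Fin d) =>
        G q.1.2 q.2 * ν ε q.2 q.1.1 * u q.2) :=
      ((hGmeas.comp ((measurable_snd.comp measurable_fst).prodMk measurable_snd)).mul
        ((hνmeas ε).comp (measurable_snd.prodMk (measurable_fst.comp measurable_fst)))).mul
        (humeas.comp measurable_snd)
    exact hm.stronglyMeasurable.integral_prod_right'
  have hswap2 : (∫ ω, (∫ x in D, (∫ y in D, G x y * ν ε y ω * u y) ^ 2) ∂P) =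
      ∫ x in D, (∫ ω, (∫ y in D, G x y * ν ε y ω * u y) ^ 2 ∂P) := by
    apply integral_integral_swap
    have heq2 : (fun q : Ω × (EuclideanSpace ℝ (Fin d)) =>
        (∫ y in D, G q.2 y * ν ε y q.1 * u y) ^ 2) =
        fun q => (∫ y in D, G q.2 y * ν ε y q.1 * u y) *
          (∫ y in D, G q.2 y * ν ε y q.1 * u y) := by
      funext q; rw [sq]
    refine Integrable.mono' (integrable_const ((A * C ^ 2 * M1) ^ 2)) ?_ ?_
    · show AEStronglyMeasurable (fun q : Ω × (EuclideanSpace ℝ (Fin d)) =>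
        (∫ y in D, G q.2 y * ν ε y q.1 * u y) ^ 2) _
      rw [heq2]
      exact (hFmeas.mul hFmeas).aestronglyMeasurable
    · have haeD : ∀ᵐ q ∂(P.prod (volume.restrict D)), q.2 ∈ D := by
        rw [Measure.ae_prod_iff_ae_ae]
        · exact Filter.Eventually.of_forall fun ω => ae_restrict_mem hDm
        · exact measurable_snd hDm
      filter_upwards [haeD] with q hq
      have hb := hFbd q.2 hq q.1
      calc ‖(∫ y in D, G q.2 y * ν ε y q.1 * u y) ^ 2‖
          = |∫ y in D, G q.2 y * ν ε y q.1 * u y| ^ 2 := by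
            rw [Real.norm_eq_abs, abs_pow]
        _ ≤ (A * C ^ 2 * M1) ^ 2 := pow_le_pow_left₀ (abs_nonneg _) hb 2
  calc (∫ ω, (∫ x in D, (-∫ y in D, G x y * ν ε y ω * u y) ^ 2) ∂P)
      = ∫ ω, (∫ x in D, (∫ y in D, G x y * ν ε y ω * u y) ^ 2) ∂P := by
        simp only [neg_sq]
    _ = ∫ x in D, (∫ ω, (∫ y in D, G x y * ν ε y ω * u y) ^ 2 ∂P) := hswap2
    _ ≤ ∫ x in D, K * ε ^ d := by
        refine integral_mono_of_nonneg ?_ (integrable_const _) ?_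
        · exact Filter.Eventually.of_forall fun x => integral_nonneg fun ω => sq_nonneg _
        · filter_upwards [ae_restrict_mem hDm] with x hx using hJbd x hx
    _ = (volume D).toReal * (K * ε ^ d) := by rw [setIntegral_const, smul_eq_mul, measureReal_def]
    _ ≤ ((volume D).toReal * K + 1) * ε ^ d := by
        have h0 : 0 ≤ (volume D).toReal := ENNReal.toReal_nonneg
        nlinarith

lemma aux_log {T : ℝ} (hT : 1 ≤ T) {t : ℝ} (ht0 : 0 < t) (htT : t ≤ T) :
    |Real.log t| + 1 ≤ (5 + (|Real.log T| + 1) * T ^ ((3:ℝ)/4)) * t ^ (-((3:ℝ)/4)) := by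
  have hT0 : (0:ℝ) < T := lt_of_lt_of_le one_pos hT
  have htneg : 0 ≤ t ^ (-((3:ℝ)/4)) := Real.rpow_nonneg ht0.le _
  have hTpow : 0 ≤ (|Real.log T| + 1) * T ^ ((3:ℝ)/4) :=
    mul_nonneg (by positivity) (Real.rpow_nonneg hT0.le _)
  rcases le_or_gt t 1 with h1 | h1
  · have hlog : |Real.log t| = Real.log t⁻¹ := by
      rw [Real.log_inv, abs_of_nonpos (Real.log_nonpos ht0.le h1)]
    have hti : 0 < t⁻¹ := inv_pos.2 ht0
    have e2 : t⁻¹ ^ ((1:ℝ)/4) = t ^ (-((1:ℝ)/4)) := by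
      rw [Real.inv_rpow ht0.le, ← Real.rpow_neg ht0.le]
    have h4 : Real.log t⁻¹ ≤ 4 * t ^ (-((1:ℝ)/4)) := by
      have e : Real.log (t⁻¹ ^ ((1:ℝ)/4)) = (1/4) * Real.log t⁻¹ :=
        Real.log_rpow hti _
      have hle : Real.log (t⁻¹ ^ ((1:ℝ)/4)) ≤ t⁻¹ ^ ((1:ℝ)/4) := by
        have := Real.log_le_sub_one_of_pos (Real.rpow_pos_of_pos hti ((1:ℝ)/4))
        linarith
      rw [e, e2] at hle
      linarith
    have hmono : t ^ (-((1:ℝ)/4)) ≤ t ^ (-((3:ℝ)/4)) :=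
      Real.rpow_le_rpow_of_exponent_ge ht0 h1 (by norm_num)
    have hone : 1 ≤ t ^ (-((3:ℝ)/4)) :=
      Real.one_le_rpow_of_pos_of_le_one_of_nonpos ht0 h1 (by norm_num)
    rw [hlog]
    nlinarith [mul_nonneg hTpow htneg]
  · have hlog : |Real.log t| = Real.log t := abs_of_nonneg (Real.log_nonneg h1.le)
    have hltT : Real.log t ≤ |Real.log T| :=
      le_trans (Real.log_le_log ht0 htT) (le_abs_self _)
    have hmono : T ^ (-((3:ℝ)/4)) ≤ t ^ (-((3:ℝ)/4)) :=
      Real.rpow_le_rpow_of_nonpos ht0 htT (by norm_num)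
    have hTT : T ^ ((3:ℝ)/4) * T ^ (-((3:ℝ)/4)) = 1 := by
      rw [← Real.rpow_add hT0]; norm_num
    have key : (|Real.log T| + 1) * T ^ ((3:ℝ)/4) * T ^ (-((3:ℝ)/4)) ≤
        (|Real.log T| + 1) * T ^ ((3:ℝ)/4) * t ^ (-((3:ℝ)/4)) :=
      mul_le_mul_of_nonneg_left hmono hTpow
    rw [mul_assoc, hTT, mul_one] at key
    nlinarith

/-- Corrector estimate: with a Green's kernel bound, `u ∈ L^∞(D)`, and a mean-zero
random field `ν_ε` whose covariance is `R((y−z)/ε)` with `R ∈ L¹ ∩ L^∞`, the corrector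
`χ^ε(x) = −∫_D G(x,y) ν_ε(y) u(y) dy` satisfies `E‖χ^ε‖²_{L²(D)} ≤ C' ε^d`. -/
theorem stmt11 (d : ℕ) (hd : d = 2 ∨ d = 3)
    (D : Set (EuclideanSpace ℝ (Fin d))) (hDb : IsBounded D) (hDm : MeasurableSet D)
    (G : EuclideanSpace ℝ (Fin d) → EuclideanSpace ℝ (Fin d) → ℝ)
    (hGmeas : Measurable (Function.uncurry G)) (C : ℝ) (hC : 0 < C)
    (hG3 : d = 3 → ∀ x y, x ≠ y → |G x y| ≤ C * ‖x - y‖ ^ ((2:ℝ) - d))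
    (hG2 : d = 2 → ∀ x y, x ≠ y → |G x y| ≤ C * (|Real.log ‖x - y‖| + 1))
    (u : EuclideanSpace ℝ (Fin d) → ℝ) (humeas : Measurable u) (hu : ∀ x, |u x| ≤ C)
    (R : EuclideanSpace ℝ (Fin d) → ℝ) (hRmeas : Measurable R)
    (hRint : Integrable R) (hRbdd : ∀ x, |R x| ≤ C)
    {Ω : Type*} [MeasurableSpace Ω] (P : Measure Ω) [IsProbabilityMeasure P]
    (ν : ℝ → EuclideanSpace ℝ (Fin d) → Ω → ℝ)
    (hνmeas : ∀ ε, Measurable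
      (Function.uncurry (ν ε) : EuclideanSpace ℝ (Fin d) × Ω → ℝ))
    (hνbdd : ∀ ε y ω, |ν ε y ω| ≤ C)
    (hνmean : ∀ ε ∈ Set.Ioc (0:ℝ) 1, ∀ y, ∫ ω, ν ε y ω ∂P = 0)
    (hνcov : ∀ ε ∈ Set.Ioc (0:ℝ) 1, ∀ y z,
      ∫ ω, ν ε y ω * ν ε z ω ∂P = R (ε⁻¹ • (y - z))) :
    ∃ C' : ℝ, 0 < C' ∧ ∀ ε ∈ Set.Ioc (0:ℝ) 1,
      (∫ ω, (∫ x in D, (-∫ y in D, G x y * ν ε y ω * u y) ^ 2) ∂P) ≤ C' * ε ^ d := by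
  obtain ⟨r, hr0, hDr⟩ := hDb.subset_ball_lt 0 0
  rcases hd with hd2 | hd3
  · subst hd2
    set T : ℝ := max (2 * r) 1 with hTdef
    have hT1 : (1:ℝ) ≤ T := le_max_right _ _
    have hT0 : (0:ℝ) < T := lt_of_lt_of_le one_pos hT1
    have hApos : 0 ≤ 5 + (|Real.log T| + 1) * T ^ ((3:ℝ)/4) := by
      have := mul_nonneg (by positivity : (0:ℝ) ≤ |Real.log T| + 1)
        (Real.rpow_nonneg hT0.le ((3:ℝ)/4))
      linarith
    have hGs : ∀ x ∈ D, ∀ y ∈ D, x ≠ y →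
        |G x y| ≤ (C * (5 + (|Real.log T| + 1) * T ^ ((3:ℝ)/4))) * ‖x - y‖ ^ (-((3:ℝ)/4)) := by
      intro x hx y hy hxy
      have hnorm0 : 0 < ‖x - y‖ := by
        rw [norm_sub_pos_iff]; exact hxy
      have hnormT : ‖x - y‖ ≤ T := by
        have hx' := mem_ball_zero_iff.1 (hDr hx)
        have hy' := mem_ball_zero_iff.1 (hDr hy)
        calc ‖x - y‖ ≤ ‖x‖ + ‖y‖ := norm_sub_le _ _
          _ ≤ 2 * r := by linarith
          _ ≤ T := le_max_left _ _
      calc |G x y| ≤ C * (|Real.log ‖x - y‖| + 1) := hG2 rfl x y hxy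
        _ ≤ C * ((5 + (|Real.log T| + 1) * T ^ ((3:ℝ)/4)) * ‖x - y‖ ^ (-((3:ℝ)/4))) :=
            mul_le_mul_of_nonneg_left (aux_log hT1 hnorm0 hnormT) hC.le
        _ = _ := by ring
    exact aux_key (by norm_num : 0 < 2) D hDm hr0 hDr G hGmeas
      (mul_nonneg hC.le hApos) (by norm_num : (0:ℝ) ≤ 3/4)
      (by norm_num : 2 * ((3:ℝ)/4) < ((2:ℕ):ℝ)) hGs u humeas C hC hu R hRmeas hRint hRbdd
      P ν hνmeas hνbdd hνcov
  · subst hd3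
    have hGs : ∀ x ∈ D, ∀ y ∈ D, x ≠ y → |G x y| ≤ C * ‖x - y‖ ^ (-(1:ℝ)) := by
      intro x _ y _ hxy
      have h := hG3 rfl x y hxy
      have he : ((2:ℝ) - ((3:ℕ):ℝ)) = -1 := by norm_num
      rwa [he] at h
    exact aux_key (by norm_num : 0 < 3) D hDm hr0 hDr G hGmeas hC.le
      (by norm_num : (0:ℝ) ≤ 1) (by norm_num : 2 * (1:ℝ) < ((3:ℕ):ℝ)) hGs
      u humeas C hC hu R hRmeas hRint hRbdd P ν hνmeas hνbdd hνcov
end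

section
/- Let d = 3, D ⊂ R³ bounded, |G(x,y)| ≤ C|x−y|^{−1}, u ∈ L^∞(D), and R ∈ L¹(R³) with R(·)/|·| ∈ L¹(R³). Then the mean function m_ε(x) := ∫_{D²} G(x,y) G(y,z) R((y−z)/ε) u(z) dz dy satisfies ‖m_ε‖²_{L²(D)} ≤ C ε⁴. -/
open MeasureTheory Bornology Metric Module

/-! Since `D` has finite measure, it suffices to bound `m_ε` pointwise on `D` by `C ε²`.
Bounding both Green's functions by the Riesz kernel `‖x - y‖⁻¹`, the `z`-integral is at most
`C₀² ∫ ‖y - z‖⁻¹ |R ((y - z) / ε)| dz`, and the substitution `w = (y - z) / ε` turns this into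
`C₀² ε^(d-1) ∫ ‖w‖⁻¹ |R w| dw`, uniformly in `y`. The remaining `y`-integral is then bounded by
`C₀ sup_{x ∈ D} ∫_D ‖x - y‖⁻¹ dy`, which is finite because the Riesz kernel is locally integrable
in dimension `d ≥ 2`. -/

section RieszKernelEstimates

variable {E : Type*} [NormedAddCommGroup E] [NormedSpace ℝ E] [FiniteDimensional ℝ E]
  [MeasurableSpace E] [BorelSpace E] {μ : Measure E} [μ.IsAddHaarMeasure]

lemma integrableOn_inv_norm_ball (hd : 2 ≤ finrank ℝ E) (r : ℝ) :
    IntegrableOn (fun w : E => ‖w‖⁻¹) (ball 0 r) μ := by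
  refine integrableOn_ball_of_norm_le_rpow (C := 1) (α := 1) (by omega)
    (by exact_mod_cast hd) (ae_of_all _ fun w => ?_) measurable_norm.inv.aestronglyMeasurable
  simp [Real.rpow_neg_one]

lemma exists_forall_setIntegral_inv_norm_sub_le (hd : 2 ≤ finrank ℝ E) {D : Set E}
    (hD : IsBounded D) :
    ∃ K, ∀ x ∈ D, IntegrableOn (fun y => ‖x - y‖⁻¹) D μ ∧ ∫ y in D, ‖x - y‖⁻¹ ∂μ ≤ K := by
  set s := diam D + 1
  refine ⟨∫ w in ball 0 s, ‖w‖⁻¹ ∂μ, fun x hx => ?_⟩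
  have hsub : D ⊆ (x - ·) ⁻¹' ball 0 s := fun y hy => by
    simpa [← dist_eq_norm, s] using (dist_le_diam_of_mem hD hx hy).trans_lt (lt_add_one _)
  have htrans := Measure.measurePreserving_sub_left μ x
  have hemb := (MeasurableEquiv.subLeft x).measurableEmbedding
  have hint : IntegrableOn (fun y => ‖x - y‖⁻¹) ((x - ·) ⁻¹' ball 0 s) μ :=
    (htrans.integrableOn_comp_preimage hemb).2 (integrableOn_inv_norm_ball hd s)
  refine ⟨hint.mono_set hsub, ?_⟩
  calc ∫ y in D, ‖x - y‖⁻¹ ∂μ ≤ ∫ y in (x - ·) ⁻¹' ball 0 s, ‖x - y‖⁻¹ ∂μ :=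
        setIntegral_mono_set hint (ae_of_all _ fun _ => by positivity) hsub.eventuallyLE
    _ = ∫ w in ball 0 s, ‖w‖⁻¹ ∂μ :=
        htrans.setIntegral_preimage_emb hemb (fun w => ‖w‖⁻¹) _

lemma integrable_inv_norm_sub_mul_comp_inv_smul {g : E → ℝ}
    (hg : Integrable (fun w => ‖w‖⁻¹ * g w) μ) {ε : ℝ} (hε : 0 < ε) (y : E) :
    Integrable (fun z => ‖y - z‖⁻¹ * g (ε⁻¹ • (y - z))) μ := by
  have hscaled : Integrable (fun v : E => ε⁻¹ * (‖ε⁻¹ • v‖⁻¹ * g (ε⁻¹ • v))) μ :=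
    ((integrable_comp_smul_iff μ _ (inv_ne_zero hε.ne')).2 hg).const_mul _
  refine (hscaled.comp_sub_left y).congr (ae_of_all _ fun z => ?_)
  simp only [norm_smul, norm_inv, Real.norm_of_nonneg hε.le, mul_inv, inv_inv]
  field_simp

lemma integral_inv_norm_sub_mul_comp_inv_smul (hd : 1 ≤ finrank ℝ E) (g : E → ℝ) {ε : ℝ}
    (hε : 0 < ε) (y : E) :
    ∫ z, ‖y - z‖⁻¹ * g (ε⁻¹ • (y - z)) ∂μ = ε ^ (finrank ℝ E - 1) * ∫ w, ‖w‖⁻¹ * g w ∂μ := by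
  have hrescale : (fun v : E => ‖v‖⁻¹ * g (ε⁻¹ • v))
      = fun v => ε⁻¹ * (‖ε⁻¹ • v‖⁻¹ * g (ε⁻¹ • v)) := by
    ext v
    simp only [norm_smul, norm_inv, Real.norm_of_nonneg hε.le, mul_inv, inv_inv]
    field_simp
  rw [integral_sub_left_eq_self (fun v => ‖v‖⁻¹ * g (ε⁻¹ • v)) μ y, hrescale,
    integral_const_mul, Measure.integral_comp_inv_smul_of_nonneg μ (fun w => ‖w‖⁻¹ * g w) hε.le,
    smul_eq_mul, ← mul_assoc, ← pow_sub_one_mul (by omega) ε]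
  field_simp

lemma abs_setIntegral_mul_le_of_abs_le_inv_norm_sub [Nontrivial E] {G : E → E → ℝ} {C : ℝ}
    (hG : ∀ x y, x ≠ y → |G x y| ≤ C * ‖x - y‖⁻¹) {f g : E → ℝ} (hfg : ∀ y, |f y| ≤ g y)
    {D : Set E} {x : E} (hg : IntegrableOn (fun y => ‖x - y‖⁻¹ * g y) D μ) :
    |∫ y in D, G x y * f y ∂μ| ≤ C * ∫ y in D, ‖x - y‖⁻¹ * g y ∂μ := by
  rw [← integral_const_mul, ← Real.norm_eq_abs]
  refine norm_integral_le_of_norm_le (hg.const_mul C) ?_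
  filter_upwards [ae_restrict_of_ae (μ.ae_ne x)] with y hy
  rw [Real.norm_eq_abs, abs_mul, ← mul_assoc]
  exact mul_le_mul (hG x y hy.symm) (hfg y) (abs_nonneg _)
    ((abs_nonneg _).trans (hG x y hy.symm))

lemma abs_setIntegral_kernel_mul_comp_inv_smul_le [Nontrivial E] {G : E → E → ℝ} {C : ℝ}
    (hC : 0 ≤ C) (hG : ∀ x y, x ≠ y → |G x y| ≤ C * ‖x - y‖⁻¹) {u : E → ℝ} {Cu : ℝ}
    (hu : ∀ z, |u z| ≤ Cu) {R : E → ℝ} (hR : Integrable (fun w => ‖w‖⁻¹ * |R w|) μ)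
    (D : Set E) {ε : ℝ} (hε : 0 < ε) (y : E) :
    |∫ z in D, G y z * (R (ε⁻¹ • (y - z)) * u z) ∂μ|
      ≤ C * Cu * ε ^ (finrank ℝ E - 1) * ∫ w, ‖w‖⁻¹ * |R w| ∂μ := by
  have hCu : 0 ≤ Cu := (abs_nonneg _).trans (hu y)
  have hint := integrable_inv_norm_sub_mul_comp_inv_smul hR hε y
  calc |∫ z in D, G y z * (R (ε⁻¹ • (y - z)) * u z) ∂μ|
      ≤ C * ∫ z in D, ‖y - z‖⁻¹ * (Cu * |R (ε⁻¹ • (y - z))|) ∂μ := by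
        refine abs_setIntegral_mul_le_of_abs_le_inv_norm_sub hG (fun z => ?_) ?_
        · rw [abs_mul, mul_comm Cu]
          exact mul_le_mul_of_nonneg_left (hu z) (abs_nonneg _)
        · simpa only [mul_left_comm _ Cu] using (hint.const_mul Cu).integrableOn
    _ = C * Cu * ∫ z in D, ‖y - z‖⁻¹ * |R (ε⁻¹ • (y - z))| ∂μ := by
        simp only [mul_left_comm _ Cu, integral_const_mul, mul_assoc]
    _ ≤ C * Cu * ∫ z, ‖y - z‖⁻¹ * |R (ε⁻¹ • (y - z))| ∂μ :=
        mul_le_mul_of_nonneg_left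
          (setIntegral_le_integral hint (ae_of_all _ fun _ => by positivity)) (by positivity)
    _ = C * Cu * ε ^ (finrank ℝ E - 1) * ∫ w, ‖w‖⁻¹ * |R w| ∂μ := by
        rw [integral_inv_norm_sub_mul_comp_inv_smul finrank_pos (fun w => |R w|) hε y,
          mul_assoc (C * Cu)]

noncomputable def meanFunction (μ : Measure E) (D : Set E) (G : E → E → ℝ) (R u : E → ℝ) (ε : ℝ)
    (x : E) : ℝ :=
  ∫ y in D, ∫ z in D, G x y * G y z * R (ε⁻¹ • (y - z)) * u z ∂μ ∂μ

lemma abs_meanFunction_le [Nontrivial E] {G : E → E → ℝ} {C : ℝ}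
    (hC : 0 ≤ C) (hG : ∀ x y, x ≠ y → |G x y| ≤ C * ‖x - y‖⁻¹) {u : E → ℝ} {Cu : ℝ}
    (hu : ∀ z, |u z| ≤ Cu) {R : E → ℝ} (hR : Integrable (fun w => ‖w‖⁻¹ * |R w|) μ)
    {D : Set E} {ε : ℝ} (hε : 0 < ε) {x : E} {K : ℝ}
    (hx : IntegrableOn (fun y => ‖x - y‖⁻¹) D μ) (hK : ∫ y in D, ‖x - y‖⁻¹ ∂μ ≤ K) :
    |meanFunction μ D G R u ε x|
      ≤ C * (C * Cu * ε ^ (finrank ℝ E - 1) * ∫ w, ‖w‖⁻¹ * |R w| ∂μ) * K := by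
  set Q := C * Cu * ε ^ (finrank ℝ E - 1) * ∫ w, ‖w‖⁻¹ * |R w| ∂μ
  have hQ : 0 ≤ Q := by
    have := (abs_nonneg _).trans (hu x)
    have : 0 ≤ ∫ w, ‖w‖⁻¹ * |R w| ∂μ := integral_nonneg fun w => by positivity
    positivity
  simp only [meanFunction, mul_assoc, integral_const_mul]
  calc |∫ y in D, G x y * ∫ z in D, G y z * (R (ε⁻¹ • (y - z)) * u z) ∂μ ∂μ|
      ≤ C * ∫ y in D, ‖x - y‖⁻¹ * Q ∂μ :=
        abs_setIntegral_mul_le_of_abs_le_inv_norm_sub hG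
          (abs_setIntegral_kernel_mul_comp_inv_smul_le hC hG hu hR D hε) (hx.mul_const Q)
    _ ≤ C * (Q * K) := by
        rw [integral_mul_const, mul_comm _ Q]
        gcongr

end RieszKernelEstimates

theorem stmt17_general (D : Set (EuclideanSpace ℝ (Fin 3)))
    (hDb : IsBounded D)
    (G : EuclideanSpace ℝ (Fin 3) → EuclideanSpace ℝ (Fin 3) → ℝ)
    (C₀ : ℝ) (hC₀ : 0 < C₀)
    (hG : ∀ x y, x ≠ y → |G x y| ≤ C₀ * ‖x - y‖⁻¹)
    (u : EuclideanSpace ℝ (Fin 3) → ℝ) (hu : ∀ x, |u x| ≤ C₀)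
    (R : EuclideanSpace ℝ (Fin 3) → ℝ)
    (hRint' : Integrable (fun w : EuclideanSpace ℝ (Fin 3) => R w * ‖w‖⁻¹)) :
    ∃ C : ℝ, ∀ ε ∈ Set.Ioc (0:ℝ) 1,
      (∫ x in D,
        (∫ y in D, ∫ z in D, G x y * G y z * R (ε⁻¹ • (y - z)) * u z) ^ 2)
        ≤ C * ε ^ 4 := by
  have hR : Integrable (fun w : EuclideanSpace ℝ (Fin 3) => ‖w‖⁻¹ * |R w|) := by
    refine hRint'.abs.congr (ae_of_all _ fun w => ?_)
    simp only [abs_mul, abs_inv, abs_norm, mul_comm]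
  obtain ⟨K, hK⟩ := exists_forall_setIntegral_inv_norm_sub_le (μ := volume) (by simp) hDb
  set I := ∫ w, ‖w‖⁻¹ * |R w|
  refine ⟨(C₀ * (C₀ * C₀ * I) * K) ^ 2 * volume.real D, fun ε ⟨hε, _⟩ => ?_⟩
  have hm : ∀ x ∈ D,
      ‖meanFunction volume D G R u ε x ^ 2‖ ≤ (C₀ * (C₀ * C₀ * ε ^ 2 * I) * K) ^ 2 := by
    intro x hx
    rw [Real.norm_eq_abs, abs_pow]
    gcongr
    simpa using abs_meanFunction_le hC₀.le hG hu hR hε (hK x hx).1 (hK x hx).2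
  calc ∫ x in D, meanFunction volume D G R u ε x ^ 2
      ≤ ‖∫ x in D, meanFunction volume D G R u ε x ^ 2‖ := Real.le_norm_self _
    _ ≤ (C₀ * (C₀ * C₀ * ε ^ 2 * I) * K) ^ 2 * volume.real D :=
        norm_setIntegral_le_of_norm_le_const hDb.measure_lt_top hm
    _ = (C₀ * (C₀ * C₀ * I) * K) ^ 2 * volume.real D * ε ^ 4 := by ring

/-- Mean-term estimate in `d = 3`: with `|G(x,y)| ≤ C|x−y|⁻¹`, `u ∈ L^∞(D)`, `R ∈ L¹`
and `R(·)/|·| ∈ L¹`, the mean function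
`m_ε(x) = ∫∫ G(x,y)G(y,z) R((y−z)/ε) u(z) dz dy` satisfies `‖m_ε‖²_{L²(D)} ≤ C ε⁴`. -/
theorem stmt17 (D : Set (EuclideanSpace ℝ (Fin 3)))
    (hDb : IsBounded D) (hDm : MeasurableSet D)
    (G : EuclideanSpace ℝ (Fin 3) → EuclideanSpace ℝ (Fin 3) → ℝ)
    (hGmeas : Measurable (Function.uncurry G)) (C₀ : ℝ) (hC₀ : 0 < C₀)
    (hG : ∀ x y, x ≠ y → |G x y| ≤ C₀ * ‖x - y‖⁻¹)
    (u : EuclideanSpace ℝ (Fin 3) → ℝ) (humeas : Measurable u) (hu : ∀ x, |u x| ≤ C₀)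
    (R : EuclideanSpace ℝ (Fin 3) → ℝ) (hRmeas : Measurable R)
    (hRint : Integrable R)
    (hRint' : Integrable (fun w : EuclideanSpace ℝ (Fin 3) => R w * ‖w‖⁻¹)) :
    ∃ C : ℝ, ∀ ε ∈ Set.Ioc (0:ℝ) 1,
      (∫ x in D,
        (∫ y in D, ∫ z in D, G x y * G y z * R (ε⁻¹ • (y - z)) * u z) ^ 2)
        ≤ C * ε ^ 4 :=
  stmt17_general D hDb G C₀ hC₀ hG u hu R hRint'
end
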